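/- For all regular trees 𝔸, 𝔹 ∈ 𝔗: 𝔸 ≤T 𝔹 if and only if ⟨𝔸⟩ ≤∅ ⟨𝔹⟩, where ⟨·⟩ is the translation into n-ary-union trees and ≤∅ is the subtyping relation up-to the empty relation. -/

import Mathlib

/-! Both directions transport a post-fixed point along `⟨·⟩`: the image of a `≤T`-simulation
is a `≤∅`-simulation, and the preimage of a `≤∅`-simulation is a `≤T`-simulation. The only
real work is the union case. The `j`-th child of `⟨𝔸⟩` is the translation of the component of
the maximal union `𝔸` of rank `j` for the left-to-right order, realised by `pathKey`. Because no
infinite branch consists of ⊕-nodes, the ⊕-child relation is well founded and a maximal union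
has finitely many components; because component paths are pairwise prefix-incomparable, their
keys are distinct. Hence ranking is a bijection from the components onto `0, …, n - 1`. -/

set_option maxHeartbeats 1000000

namespace CAPPaper

/- ## μ-types: datatype variables `var true v`, type variables `var false v`,
   type constants `const c` (with `const 0` also playing the role of junk/∘),
   type application `app`, function types `arrow`, unions `union`,
   recursive types `mu`. -/

inductive MuTy : Type
  | var : Bool → ℕ → MuTy
  | const : ℕ → MuTy
  | app : MuTy → MuTy → MuTy
  | arrow : MuTy → MuTy → MuTy
  | union : MuTy → MuTy → MuTy
  | mu : Bool → ℕ → MuTy → MuTy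

namespace MuTy

/-- Naive substitution of `T` for the variable `(b, v)`; binders shadow. -/
def subst (b : Bool) (v : ℕ) (T : MuTy) : MuTy → MuTy
  | var b' v' => if b' = b ∧ v' = v then T else var b' v'
  | const c => const c
  | app A B => app (subst b v T A) (subst b v T B)
  | arrow A B => arrow (subst b v T A) (subst b v T B)
  | union A B => union (subst b v T A) (subst b v T B)
  | mu b' v' A => if b' = b ∧ v' = v then mu b' v' A else mu b' v' (subst b v T A)

/-- The variable `(b, v)` occurs free. -/
def FreeIn (b : Bool) (v : ℕ) : MuTy → Prop
  | var b' v' => b' = b ∧ v' = v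
  | const _ => False
  | app A B => FreeIn b v A ∨ FreeIn b v B
  | arrow A B => FreeIn b v A ∨ FreeIn b v B
  | union A B => FreeIn b v A ∨ FreeIn b v B
  | mu b' v' A => ¬(b' = b ∧ v' = v) ∧ FreeIn b v A

/-- The variable `(b, v)` occurs only under `⊃` or `@`. -/
def Guarded (b : Bool) (v : ℕ) : MuTy → Prop
  | var b' v' => ¬(b' = b ∧ v' = v)
  | const _ => True
  | app _ _ => True
  | arrow _ _ => True
  | union A B => Guarded b v A ∧ Guarded b v B
  | mu b' v' A => (b' = b ∧ v' = v) ∨ Guarded b v A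

/-- Contractive μ-types. -/
def Contr : MuTy → Prop
  | var _ _ => True
  | const _ => True
  | app A B => Contr A ∧ Contr B
  | arrow A B => Contr A ∧ Contr B
  | union A B => Contr A ∧ Contr B
  | mu b v A => Guarded b v A ∧ Contr A

/-- μ-datatypes. -/
inductive IsData : MuTy → Prop
  | var (v : ℕ) : IsData (var true v)
  | const (c : ℕ) : IsData (const c)
  | app {D : MuTy} (A : MuTy) : IsData D → IsData (app D A)
  | union {D D' : MuTy} : IsData D → IsData D' → IsData (union D D')
  | mu {v : ℕ} {D : MuTy} : IsData D → IsData (mu true v D)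

def IsMu : MuTy → Prop
  | mu _ _ _ => True
  | _ => False

def IsUnion : MuTy → Prop
  | union _ _ => True
  | _ => False

def IsAtom : MuTy → Prop
  | var _ _ => True
  | const _ => True
  | _ => False

/-- The non-union components of a maximal union, in left-to-right order. -/
def comps : MuTy → List MuTy
  | union A B => comps A ++ comps B
  | A => [A]

/-- Replace the `i`-th (left-to-right) non-union component of a maximal union. -/
def replaceComp : MuTy → ℕ → MuTy → MuTy
  | union A B, i, N =>
      if i < (comps A).length then union (replaceComp A i N) B
      else union A (replaceComp B (i - (comps A).length) N)
  | A, i, N => if i = 0 then N else A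

end MuTy

/- ## Type equivalence `≈μ` -/

inductive EqMu : MuTy → MuTy → Prop
  | refl (A : MuTy) : EqMu A A
  | symm {A B : MuTy} : EqMu A B → EqMu B A
  | trans {A B C : MuTy} : EqMu A B → EqMu B C → EqMu A C
  | app {D D' A A' : MuTy} : EqMu D D' → EqMu A A' → EqMu (.app D A) (.app D' A')
  | arrow {A A' B B' : MuTy} : EqMu A A' → EqMu B B' → EqMu (.arrow A B) (.arrow A' B')
  | union {A A' B B' : MuTy} : EqMu A A' → EqMu B B' → EqMu (.union A B) (.union A' B')
  | mu {A B : MuTy} (b : Bool) (v : ℕ) : EqMu A B → EqMu (.mu b v A) (.mu b v B)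
  | idem (A : MuTy) : EqMu (.union A A) A
  | comm (A B : MuTy) : EqMu (.union A B) (.union B A)
  | assoc (A B C : MuTy) : EqMu (.union A (.union B C)) (.union (.union A B) C)
  | fold (b : Bool) (v : ℕ) (A : MuTy) : EqMu (.mu b v A) (MuTy.subst b v (.mu b v A) A)
  | contract {A B : MuTy} {b : Bool} {v : ℕ} :
      EqMu A (MuTy.subst b v A B) → MuTy.Contr (.mu b v B) → EqMu A (.mu b v B)

/- ## Subtyping `Σ ⊢ A ≤μ B` -/

inductive SubMu : Set ((Bool × ℕ) × (Bool × ℕ)) → MuTy → MuTy → Prop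
  | refl (SS) (A : MuTy) : SubMu SS A A
  | hyp {SS} {V W : Bool × ℕ} : (V, W) ∈ SS → SubMu SS (.var V.1 V.2) (.var W.1 W.2)
  | eq {A B : MuTy} (SS) : EqMu A B → SubMu SS A B
  | trans {SS} {A B C : MuTy} : SubMu SS A B → SubMu SS B C → SubMu SS A C
  | app {SS} {D D' A A' : MuTy} : SubMu SS D D' → SubMu SS A A' →
      SubMu SS (.app D A) (.app D' A')
  | arrow {SS} {A A' B B' : MuTy} : SubMu SS A A' → SubMu SS B B' →
      SubMu SS (.arrow A' B) (.arrow A B')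
  | unionL {SS} {A B C : MuTy} : SubMu SS A C → SubMu SS B C → SubMu SS (.union A B) C
  | unionR1 {SS} {A B C : MuTy} : SubMu SS A B → SubMu SS A (.union B C)
  | unionR2 {SS} {A B C : MuTy} : SubMu SS A C → SubMu SS A (.union B C)
  | mu {SS} {V W : Bool × ℕ} {A B : MuTy} :
      SubMu (insert (V, W) SS) A B →
      ¬ MuTy.FreeIn W.1 W.2 A → ¬ MuTy.FreeIn V.1 V.2 B →
      SubMu SS (.mu V.1 V.2 A) (.mu W.1 W.2 B)

/-- `A ≤μ B` (empty set of hypotheses). -/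
def Sub (A B : MuTy) : Prop := SubMu ∅ A B

/- ## Coinductive equivalence `≈⃗μ` and subtyping `≤⃗μ` on μ-types,
   given via their generating functions and greatest fixed points. -/

/-- One-step unfolding of the rules for `≈⃗μ`. -/
def EqVecStep (R : MuTy → MuTy → Prop) (A B : MuTy) : Prop :=
  (MuTy.IsAtom A ∧ A = B)
  ∨ (∃ D A' D' B', A = .app D A' ∧ B = .app D' B' ∧ R D D' ∧ R A' B')
  ∨ (∃ A1 A2 B1 B2, A = .arrow A1 A2 ∧ B = .arrow B1 B2 ∧ R A1 B1 ∧ R A2 B2)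
  ∨ (∃ i b v C, (∀ X ∈ A.comps.take i, ¬ X.IsMu) ∧ A.comps[i]? = some (.mu b v C) ∧
      R (A.replaceComp i (MuTy.subst b v (.mu b v C) C)) B)
  ∨ ((∀ X ∈ A.comps, ¬ X.IsMu) ∧
      ∃ j b w C, (∀ Y ∈ B.comps.take j, ¬ Y.IsMu) ∧ B.comps[j]? = some (.mu b w C) ∧
      R A (B.replaceComp j (MuTy.subst b w (.mu b w C) C)))
  ∨ ((A.IsUnion ∨ B.IsUnion) ∧ (∀ X ∈ A.comps, ¬ X.IsMu) ∧ (∀ Y ∈ B.comps, ¬ Y.IsMu) ∧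
      (∀ X ∈ A.comps, ∃ Y ∈ B.comps, R X Y) ∧ (∀ Y ∈ B.comps, ∃ X ∈ A.comps, R X Y))

/-- The generating function `Φ≈⃗μ`. -/
def PhiEqVec (X : Set (MuTy × MuTy)) : Set (MuTy × MuTy) :=
  {p | EqVecStep (fun a b => (a, b) ∈ X) p.1 p.2}

/-- `A ≈⃗μ B`: the greatest fixed point of `Φ≈⃗μ`. -/
def EqVec (A B : MuTy) : Prop :=
  ∃ R : MuTy → MuTy → Prop, (∀ x y, R x y → EqVecStep R x y) ∧ R A B

/-- One-step unfolding of the rules for `≤⃗μ`. -/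
def SubVecStep (R : MuTy → MuTy → Prop) (A B : MuTy) : Prop :=
  (MuTy.IsAtom A ∧ A = B)
  ∨ (∃ D A' D' B', A = .app D A' ∧ B = .app D' B' ∧ R D D' ∧ R A' B')
  ∨ (∃ A1 A2 B1 B2, A = .arrow A1 A2 ∧ B = .arrow B1 B2 ∧ R B1 A1 ∧ R A2 B2)
  ∨ (∃ b v A', A = .mu b v A' ∧ R (MuTy.subst b v A A') B)
  ∨ (¬ A.IsMu ∧ ∃ b w B', B = .mu b w B' ∧ R A (MuTy.subst b w B B'))
  ∨ (A.IsUnion ∧ ¬ B.IsMu ∧ ∀ A' ∈ A.comps, R A' B)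
  ∨ (¬ A.IsUnion ∧ ¬ A.IsMu ∧ B.IsUnion ∧ ∃ B' ∈ B.comps, R A B')

/-- The generating function `Φ≤⃗μ`. -/
def PhiSubVec (X : Set (MuTy × MuTy)) : Set (MuTy × MuTy) :=
  {p | SubVecStep (fun a b => (a, b) ∈ X) p.1 p.2}

/-- `A ≤⃗μ B`: the greatest fixed point of `Φ≤⃗μ`. -/
def SubVec (A B : MuTy) : Prop :=
  ∃ R : MuTy → MuTy → Prop, (∀ x y, R x y → SubVecStep R x y) ∧ R A B

/- ## Possibly infinite trees 𝔗 -/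

inductive Leaf : Type
  | var : Bool → ℕ → Leaf
  | const : ℕ → Leaf
  | circ : Leaf
deriving DecidableEq

inductive TSym : Type
  | leaf : Leaf → TSym
  | app : TSym
  | arrow : TSym
  | union : TSym
deriving DecidableEq

/-- Raw (partial) trees: a labelling of binary positions. -/
abbrev PTree := List Bool → Option TSym

def childT (t : PTree) (i : Bool) : PTree := fun π => t (i :: π)

def subtreeAt (t : PTree) (ρ : List Bool) : PTree := fun π => t (ρ ++ π)

def TSym.IsBinary : TSym → Prop
  | .leaf _ => False
  | _ => True

/-- The set 𝔗 of regular possibly infinite trees with no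
    infinite branch consisting solely of ⊕-nodes. -/
structure ITree where
  label : PTree
  root_isSome : (label []).isSome
  child_iff : ∀ (π : List Bool) (i : Bool),
      (label (π ++ [i])).isSome ↔ ∃ s, label π = some s ∧ s.IsBinary
  regular : {u : PTree | ∃ π : List Bool, (label π).isSome ∧ u = subtreeAt label π}.Finite
  noUnionBranch : ¬ ∃ (π : List Bool) (g : ℕ → Bool),
      ∀ n : ℕ, label (π ++ (List.range n).map g) = some TSym.union

/- ## Truncation ⌊·⌋k -/

def truncAux : List Bool → ℕ → PTree → Option TSym
  | [], 0, _ => some (.leaf .circ)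
  | [], _ + 1, t => t []
  | _ :: _, 0, _ => none
  | i :: π, k + 1, t =>
      match t [] with
      | some .union => truncAux π (k + 1) (childT t i)
      | some .app => truncAux π k (childT t i)
      | some .arrow => truncAux π k (childT t i)
      | _ => none

/-- The truncation of a tree at depth `k`. -/
def trunc (k : ℕ) (t : PTree) : PTree := fun π => truncAux π k t

/- ## The infinite unfolding ⟦·⟧ of a μ-type -/

def muDepth : MuTy → ℕ
  | .mu _ _ A => muDepth A + 1
  | _ => 0

def headUnfold : ℕ → MuTy → MuTy
  | 0, A => A
  | n + 1, .mu b v A => headUnfold n (MuTy.subst b v (.mu b v A) A)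
  | _ + 1, A => A

/-- Unfold the head μ-binders away (total; fully unfolds contractive types). -/
def hnf (A : MuTy) : MuTy := headUnfold (muDepth A) A

def unfoldLabel : List Bool → MuTy → Option TSym
  | [], A =>
      match hnf A with
      | .var b v => some (.leaf (.var b v))
      | .const c => some (.leaf (.const c))
      | .app _ _ => some .app
      | .arrow _ _ => some .arrow
      | .union _ _ => some .union
      | .mu _ _ _ => none
  | i :: π, A =>
      match hnf A with
      | .app B C => unfoldLabel π (if i then C else B)
      | .arrow B C => unfoldLabel π (if i then C else B)
      | .union B C => unfoldLabel π (if i then C else B)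
      | _ => none

/-- `⟦A⟧`, the complete unfolding of a μ-type into a tree. -/
def treeOf (A : MuTy) : PTree := fun π => unfoldLabel π A

/- ## Maximal-union components of a tree -/

/-- `ρ` reaches, through ⊕-nodes only, a non-⊕ node of `t`:
    the components of the maximal union decomposition of `t`. -/
def IsCompPath (t : PTree) (ρ : List Bool) : Prop :=
  (∀ ρ' : List Bool, ρ' <+: ρ → ρ' ≠ ρ → t ρ' = some TSym.union) ∧
  (t ρ).isSome ∧ t ρ ≠ some TSym.union

def compPaths (t : PTree) : Set (List Bool) := {ρ | IsCompPath t ρ}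

/- ## Coinductive equality ≈T and subtyping ≤T on trees -/

def EqTStep (R : PTree → PTree → Prop) (A B : PTree) : Prop :=
  (∃ a, A [] = some (.leaf a) ∧ B [] = some (.leaf a))
  ∨ (A [] = some .app ∧ B [] = some .app ∧
      R (childT A false) (childT B false) ∧ R (childT A true) (childT B true))
  ∨ (A [] = some .arrow ∧ B [] = some .arrow ∧
      R (childT A false) (childT B false) ∧ R (childT A true) (childT B true))
  ∨ ((A [] = some .union ∨ B [] = some .union) ∧
      (∀ ρ ∈ compPaths A, ∃ ρ' ∈ compPaths B, R (subtreeAt A ρ) (subtreeAt B ρ')) ∧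
      (∀ ρ' ∈ compPaths B, ∃ ρ ∈ compPaths A, R (subtreeAt A ρ) (subtreeAt B ρ')))

/-- `≈T`, as the greatest fixed point of its generating function. -/
def EqT (A B : PTree) : Prop :=
  ∃ R : PTree → PTree → Prop, (∀ x y, R x y → EqTStep R x y) ∧ R A B

def SubTStep (R : PTree → PTree → Prop) (A B : PTree) : Prop :=
  (∃ a, A [] = some (.leaf a) ∧ B [] = some (.leaf a))
  ∨ (A [] = some .app ∧ B [] = some .app ∧
      R (childT A false) (childT B false) ∧ R (childT A true) (childT B true))
  ∨ (A [] = some .arrow ∧ B [] = some .arrow ∧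
      R (childT B false) (childT A false) ∧ R (childT A true) (childT B true))
  ∨ (A [] = some .union ∧ B [] ≠ some .union ∧
      ∀ ρ ∈ compPaths A, R (subtreeAt A ρ) B)
  ∨ (A [] ≠ some .union ∧ B [] = some .union ∧
      ∃ ρ' ∈ compPaths B, R A (subtreeAt B ρ'))
  ∨ (A [] = some .union ∧ B [] = some .union ∧
      ∀ ρ ∈ compPaths A, ∃ ρ' ∈ compPaths B, R (subtreeAt A ρ) (subtreeAt B ρ'))

/-- `≤T`, as the greatest fixed point of its generating function. -/
def SubT (A B : PTree) : Prop :=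
  ∃ R : PTree → PTree → Prop, (∀ x y, R x y → SubTStep R x y) ∧ R A B

/- ## Multi-hole μ⊕-contexts -/

inductive MuCtx : Type
  | hole : MuCtx
  | mu : Bool → ℕ → MuCtx → MuCtx
  | union : MuCtx → MuCtx → MuCtx

namespace MuCtx

def holes : MuCtx → ℕ
  | hole => 1
  | mu _ _ C => C.holes
  | union C D => C.holes + D.holes

def fill : MuCtx → List MuTy → MuTy
  | hole, As => As.headD (.const 0)
  | mu b v C, As => .mu b v (C.fill As)
  | union C D, As => .union (C.fill (As.take C.holes)) (D.fill (As.drop C.holes))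

/-- Positions of the holes, in left-to-right order. -/
def holePos : MuCtx → List (List Bool)
  | hole => [[]]
  | mu _ _ C => C.holePos.map (fun π => false :: π)
  | union C D => C.holePos.map (fun π => false :: π) ++ D.holePos.map (fun π => true :: π)

/-- Projection of the hole at position `π` of `𝖠[A⃗]`. -/
def proj : MuCtx → List MuTy → List Bool → Option MuTy
  | hole, As, [] => As.head?
  | mu b v C, As, false :: π =>
      (proj C As π).map (MuTy.subst b v (.mu b v (C.fill As)))
  | union C _D, As, false :: π => proj C (As.take C.holes) π
  | union C D, As, true :: π => proj D (As.drop C.holes) π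
  | _, _, _ => none

/-- Erase all μ-binders. -/
def erase : MuCtx → MuCtx
  | hole => hole
  | mu _ _ C => C.erase
  | union C D => .union C.erase D.erase

/-- ⊕-contexts (no μ-binders). -/
def IsUnionCtx : MuCtx → Prop
  | hole => True
  | mu _ _ _ => False
  | union C D => C.IsUnionCtx ∧ D.IsUnionCtx

/-- Filling a (μ-erased) context with trees. -/
def fillT : MuCtx → List PTree → List Bool → Option TSym
  | hole, ts, π => (ts.headD (fun _ => none)) π
  | mu _ _ C, ts, π => fillT C ts π
  | union _ _, _, [] => some TSym.union
  | union C _D, ts, false :: π => fillT C (ts.take C.holes) π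
  | union C D, ts, true :: π => fillT D (ts.drop C.holes) π

end MuCtx

/- ## n-ary-union trees 𝔗ⁿ -/

inductive NSym : Type
  | leaf : Leaf → NSym
  | app : NSym
  | arrow : NSym
  | union : ℕ → NSym

abbrev PTreeN := List ℕ → Option NSym

def childN (t : PTreeN) (j : ℕ) : PTreeN := fun π => t (j :: π)

def IsUnionRootN (t : PTreeN) : Prop := ∃ n, t [] = some (.union n)

/-- A key realising the left-to-right (lexicographic) order of prefix-free
    sets of positions. -/
def pathKey : List Bool → ℚ
  | [] => 0
  | b :: ρ => (if b then 1 else 0) + pathKey ρ / 2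

/-- `ρ` is the `j`-th (in left-to-right order, starting from 0) component path of `t`. -/
def IsNthComp (t : PTree) (j : ℕ) (ρ : List Bool) : Prop :=
  IsCompPath t ρ ∧ {ρ' | IsCompPath t ρ' ∧ pathKey ρ' < pathKey ρ}.ncard = j

-- The translation ⟨·⟩ : 𝔗 → 𝔗ⁿ flattening maximal unions into n-ary unions.
open Classical in
noncomputable def transLabel : List ℕ → PTree → Option NSym
  | [], t =>
      match t [] with
      | some (.leaf a) => some (.leaf a)
      | some .app => some NSym.app
      | some .arrow => some NSym.arrow
      | some .union => some (.union (compPaths t).ncard)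
      | none => none
  | j :: π, t =>
      match t [] with
      | some .union =>
          if h : ∃ ρ, IsNthComp t j ρ then transLabel π (subtreeAt t h.choose)
          else none
      | some .app => if j < 2 then transLabel π (childT t (j == 1)) else none
      | some .arrow => if j < 2 then transLabel π (childT t (j == 1)) else none
      | _ => none

noncomputable def transN (t : PTree) : PTreeN := fun π => transLabel π t

/- ## Subtyping and equivalence up-to a relation ℛ on 𝔗ⁿ -/

def NSubStep (RR S : PTreeN → PTreeN → Prop) (A B : PTreeN) : Prop :=
  let P := fun x y => S x y ∨ RR x y
  (∃ a, A [] = some (.leaf a) ∧ B [] = some (.leaf a))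
  ∨ (A [] = some .app ∧ B [] = some .app ∧
      P (childN A 0) (childN B 0) ∧ P (childN A 1) (childN B 1))
  ∨ (A [] = some .arrow ∧ B [] = some .arrow ∧
      P (childN B 0) (childN A 0) ∧ P (childN A 1) (childN B 1))
  ∨ (∃ n m, A [] = some (.union n) ∧ B [] = some (.union m) ∧
      (∀ i < n, ¬ IsUnionRootN (childN A i)) ∧ (∀ j < m, ¬ IsUnionRootN (childN B j)) ∧
      ∃ f : ℕ → ℕ, ∀ i < n, f i < m ∧ P (childN A i) (childN B (f i)))
  ∨ (∃ n, A [] = some (.union n) ∧ ¬ IsUnionRootN B ∧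
      (∀ i < n, ¬ IsUnionRootN (childN A i)) ∧ ∀ i < n, P (childN A i) B)
  ∨ (∃ m, B [] = some (.union m) ∧ ¬ IsUnionRootN A ∧
      (∀ j < m, ¬ IsUnionRootN (childN B j)) ∧ ∃ k < m, P A (childN B k))

/-- The subtyping relation up-to `RR` on 𝔗ⁿ. -/
def SubN (RR : PTreeN → PTreeN → Prop) (A B : PTreeN) : Prop :=
  ∃ S : PTreeN → PTreeN → Prop, (∀ x y, S x y → NSubStep RR S x y) ∧ S A B

def NEqStep (RR S : PTreeN → PTreeN → Prop) (A B : PTreeN) : Prop :=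
  let P := fun x y => S x y ∨ RR x y
  (∃ a, A [] = some (.leaf a) ∧ B [] = some (.leaf a))
  ∨ (A [] = some .app ∧ B [] = some .app ∧
      P (childN A 0) (childN B 0) ∧ P (childN A 1) (childN B 1))
  ∨ (A [] = some .arrow ∧ B [] = some .arrow ∧
      P (childN A 0) (childN B 0) ∧ P (childN A 1) (childN B 1))
  ∨ (∃ n m, A [] = some (.union n) ∧ B [] = some (.union m) ∧
      (∀ i < n, ¬ IsUnionRootN (childN A i)) ∧ (∀ j < m, ¬ IsUnionRootN (childN B j)) ∧
      (∃ f : ℕ → ℕ, ∀ i < n, f i < m ∧ P (childN A i) (childN B (f i))) ∧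
      (∃ g : ℕ → ℕ, ∀ j < m, g j < n ∧ P (childN A (g j)) (childN B j)))
  ∨ (∃ n, A [] = some (.union n) ∧ ¬ IsUnionRootN B ∧
      (∀ i < n, ¬ IsUnionRootN (childN A i)) ∧ ∀ i < n, P (childN A i) B)
  ∨ (∃ m, B [] = some (.union m) ∧ ¬ IsUnionRootN A ∧
      (∀ j < m, ¬ IsUnionRootN (childN B j)) ∧ ∀ j < m, P A (childN B j))

/-- The equivalence relation up-to `RR` on 𝔗ⁿ. -/
def EqN (RR : PTreeN → PTreeN → Prop) (A B : PTreeN) : Prop :=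
  ∃ S : PTreeN → PTreeN → Prop, (∀ x y, S x y → NEqStep RR S x y) ∧ S A B

/- ## CAP: patterns, terms, matching, reduction, typing -/

inductive Pat : Type
  | matchv : ℕ → Pat
  | const : ℕ → Pat
  | comp : Pat → Pat → Pat

/-- Matchables of a pattern. -/
def Pat.mv : Pat → Set ℕ
  | .matchv x => {x}
  | .const _ => ∅
  | .comp p q => p.mv ∪ q.mv

/-- Linear patterns. -/
def Pat.Linear : Pat → Prop
  | .matchv _ => True
  | .const _ => True
  | .comp p q => p.Linear ∧ q.Linear ∧ ∀ x ∈ p.mv, x ∉ q.mv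

/-- Typing contexts (for terms and for matchables of patterns). -/
abbrev TyCtx := ℕ → Option MuTy

inductive Tm : Type
  | var : ℕ → Tm
  | const : ℕ → Tm
  | app : Tm → Tm → Tm
  | abs : List (Pat × TyCtx × Tm) → Tm

/-- Data structures. -/
def isDataB : Tm → Bool
  | .const _ => true
  | .app d _ => isDataB d
  | _ => false

/-- Matchable forms: data structures and abstractions. -/
def isMatchableB : Tm → Bool
  | .abs _ => true
  | t => isDataB t

/-- Outcome of matching. -/
inductive MOut : Type
  | subst : (ℕ → Option Tm) → MOut
  | fail : MOut
  | wait : MOut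

/-- Disjoint union of matching outcomes. -/
def MOut.join : MOut → MOut → MOut
  | .fail, _ => .fail
  | _, .fail => .fail
  | .wait, _ => .wait
  | _, .wait => .wait
  | .subst σ₁, .subst σ₂ => .subst (fun x => (σ₁ x).orElse (fun _ => σ₂ x))

/-- The matching operation `p ⋗ u`. -/
def pmatch : Pat → Tm → MOut
  | .matchv x, u => .subst (fun y => if y = x then some u else none)
  | .const c, .const c' => if c = c' then .subst (fun _ => none) else .fail
  | .comp p q, .app u v =>
      if isMatchableB (.app u v) then (pmatch p u).join (pmatch q v) else .wait
  | _, u => if isMatchableB u then .fail else .wait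

-- Applying a substitution to a term.
mutual
  def applySubst (σ : ℕ → Option Tm) : Tm → Tm
    | .var x => (σ x).getD (.var x)
    | .const c => .const c
    | .app t u => .app (applySubst σ t) (applySubst σ u)
    | .abs bs => .abs (applySubstBs σ bs)
  def applySubstBs (σ : ℕ → Option Tm) : List (Pat × TyCtx × Tm) → List (Pat × TyCtx × Tm)
    | [] => []
    | (p, θ, s) :: bs => (p, θ, applySubst σ s) :: applySubstBs σ bs
end

/-- Reduction, the context closure of the β-rule of CAP. -/
inductive Step : Tm → Tm → Prop
  | beta (bs : List (Pat × TyCtx × Tm)) (u : Tm) (j : ℕ) (hj : j < bs.length)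
      (σ : ℕ → Option Tm) :
      (∀ i (hi : i < bs.length), i < j → pmatch (bs.get ⟨i, hi⟩).1 u = .fail) →
      pmatch (bs.get ⟨j, hj⟩).1 u = .subst σ →
      Step (.app (.abs bs) u) (applySubst σ (bs.get ⟨j, hj⟩).2.2)
  | appL {t t' : Tm} (u : Tm) : Step t t' → Step (.app t u) (.app t' u)
  | appR (t : Tm) {u u' : Tm} : Step u u' → Step (.app t u) (.app t u')
  | abs (l r : List (Pat × TyCtx × Tm)) (p : Pat) (θ : TyCtx) {s s' : Tm} :
      Step s s' → Step (.abs (l ++ (p, θ, s) :: r)) (.abs (l ++ (p, θ, s') :: r))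

/-- All patterns occurring in a term are linear. -/
inductive TmWF : Tm → Prop
  | var (x : ℕ) : TmWF (.var x)
  | const (c : ℕ) : TmWF (.const c)
  | app {t u : Tm} : TmWF t → TmWF u → TmWF (.app t u)
  | abs {bs : List (Pat × TyCtx × Tm)} :
      (∀ b ∈ bs, b.1.Linear) → (∀ b ∈ bs, TmWF b.2.2) → TmWF (.abs bs)

-- Values.
mutual
  inductive Neut : Tm → Prop
    | var (x : ℕ) : Neut (.var x)
    | const (c : ℕ) : Neut (.const c)
    | app {t u : Tm} : Neut t → IsValue u → Neut (.app t u)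
  inductive IsValue : Tm → Prop
    | neut {t : Tm} : Neut t → IsValue t
    | abs (bs : List (Pat × TyCtx × Tm)) : IsValue (.abs bs)
end

/- ## Pattern typing and compatibility -/

inductive PatTy : TyCtx → Pat → MuTy → Prop
  | matchv {θ : TyCtx} {x : ℕ} {A : MuTy} : θ x = some A → PatTy θ (.matchv x) A
  | const (θ : TyCtx) (c : ℕ) : PatTy θ (.const c) (.const c)
  | comp {θ : TyCtx} {p q : Pat} {D A : MuTy} :
      PatTy θ p D → MuTy.IsData D → PatTy θ q A → PatTy θ (.comp p q) (.app D A)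

/-- Symbols admitted at a position of a μ-type. -/
inductive PSym : Type
  | var : Bool → ℕ → PSym
  | const : ℕ → PSym
  | arrow : PSym
  | app : PSym

/-- `Admits A π s`: the symbol `s` belongs to `A@π`. -/
inductive Admits : MuTy → List Bool → PSym → Prop
  | var (b : Bool) (v : ℕ) : Admits (.var b v) [] (.var b v)
  | const (c : ℕ) : Admits (.const c) [] (.const c)
  | arrowE (A B : MuTy) : Admits (.arrow A B) [] .arrow
  | appE (A B : MuTy) : Admits (.app A B) [] .app
  | arrow1 {A : MuTy} {π : List Bool} {s : PSym} (B : MuTy) :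
      Admits A π s → Admits (.arrow A B) (false :: π) s
  | arrow2 (A : MuTy) {B : MuTy} {π : List Bool} {s : PSym} :
      Admits B π s → Admits (.arrow A B) (true :: π) s
  | app1 {A : MuTy} {π : List Bool} {s : PSym} (B : MuTy) :
      Admits A π s → Admits (.app A B) (false :: π) s
  | app2 (A : MuTy) {B : MuTy} {π : List Bool} {s : PSym} :
      Admits B π s → Admits (.app A B) (true :: π) s
  | unionL {A : MuTy} {π : List Bool} {s : PSym} (B : MuTy) :
      Admits A π s → Admits (.union A B) π s
  | unionR (A : MuTy) {B : MuTy} {π : List Bool} {s : PSym} :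
      Admits B π s → Admits (.union A B) π s
  | mu {b : Bool} {v : ℕ} {A : MuTy} {π : List Bool} {s : PSym} :
      Admits (MuTy.subst b v (.mu b v A) A) π s → Admits (.mu b v A) π s

/-- Subpattern at a position. -/
def Pat.at? : Pat → List Bool → Option Pat
  | p, [] => some p
  | .comp p q, i :: π => if i then q.at? π else p.at? π
  | _, _ :: _ => none

/-- Applying a (pattern) substitution to a pattern. -/
def psubst (σ : ℕ → Option Pat) : Pat → Pat
  | .matchv x => (σ x).getD (.matchv x)
  | .const c => .const c
  | .comp p q => .comp (psubst σ p) (psubst σ q)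

/-- `p` subsumes `q`. -/
def Subsumes (p q : Pat) : Prop := ∃ σ, psubst σ p = q

def CommonPos (p q : Pat) (π : List Bool) : Prop :=
  (p.at? π).isSome ∧ (q.at? π).isSome

/-- Mismatching positions between two patterns. -/
def CPos (p q : Pat) (π : List Bool) : Prop :=
  CommonPos p q π ∧ (∀ π' : List Bool, π' ≠ [] → ¬ CommonPos p q (π ++ π')) ∧
  ∃ p' q', p.at? π = some p' ∧ q.at? π = some q' ∧ ¬ Subsumes p' q'

/-- Compatibility of `⟨θ ⊳ p : A⟩` with `⟨θ' ⊳ q : B⟩`. -/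
def Compat (p : Pat) (A : MuTy) (q : Pat) (B : MuTy) : Prop :=
  (∀ π, CPos p q π → ∃ s, Admits A π s ∧ Admits B π s) → Sub B A

def ctxDom (θ : TyCtx) : Set ℕ := {x | (θ x).isSome}

def ctxExt (Γ θ : TyCtx) : TyCtx := fun x => (θ x).orElse (fun _ => Γ x)

/-- `⊕` of a nonempty list of types. -/
def bigUnion : List MuTy → MuTy
  | [] => .const 0
  | [A] => A
  | A :: As => .union A (bigUnion As)

/- ## Term typing -/

inductive Ty : TyCtx → Tm → MuTy → Prop
  | var {Γ : TyCtx} {x : ℕ} {A : MuTy} : Γ x = some A → Ty Γ (.var x) A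
  | const (Γ : TyCtx) (c : ℕ) : Ty Γ (.const c) (.const c)
  | comp {Γ : TyCtx} {r u : Tm} {D A : MuTy} :
      Ty Γ r D → MuTy.IsData D → Ty Γ u A → Ty Γ (.app r u) (.app D A)
  | abs {Γ : TyCtx} (l : List ((Pat × TyCtx × Tm) × MuTy)) {B : MuTy} :
      l ≠ [] →
      (∀ i j (hi : i < l.length) (hj : j < l.length), i < j →
        Compat (l.get ⟨i, hi⟩).1.1 (l.get ⟨i, hi⟩).2
               (l.get ⟨j, hj⟩).1.1 (l.get ⟨j, hj⟩).2) →
      (∀ b ∈ l, PatTy b.1.2.1 b.1.1 b.2) →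
      (∀ b ∈ l, ctxDom b.1.2.1 = Pat.mv b.1.1) →
      (∀ b ∈ l, Ty (ctxExt Γ b.1.2.1) b.1.2.2 B) →
      Ty Γ (.abs (l.map Prod.fst)) (.arrow (bigUnion (l.map Prod.snd)) B)
  | app {Γ : TyCtx} {r u : Tm} {B : MuTy} (As : List MuTy) (k : ℕ) (hk : k < As.length) :
      Ty Γ r (.arrow (bigUnion As) B) →
      Ty Γ u (As.get ⟨k, hk⟩) →
      Ty Γ (.app r u) B
  | sub {Γ : TyCtx} {s : Tm} {A A' : MuTy} : Ty Γ s A → Sub A A' → Ty Γ s A'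

/- ## Syntax-directed term typing -/

inductive TySD : TyCtx → Tm → MuTy → Prop
  | var {Γ : TyCtx} {x : ℕ} {A : MuTy} : Γ x = some A → TySD Γ (.var x) A
  | const (Γ : TyCtx) (c : ℕ) : TySD Γ (.const c) (.const c)
  | comp {Γ : TyCtx} {r u : Tm} {D A : MuTy} :
      TySD Γ r D → MuTy.IsData D → TySD Γ u A → TySD Γ (.app r u) (.app D A)
  | abs {Γ : TyCtx} (l : List ((Pat × TyCtx × Tm) × MuTy × MuTy)) :
      l ≠ [] →
      (∀ i j (hi : i < l.length) (hj : j < l.length), i < j →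
        Compat (l.get ⟨i, hi⟩).1.1 (l.get ⟨i, hi⟩).2.1
               (l.get ⟨j, hj⟩).1.1 (l.get ⟨j, hj⟩).2.1) →
      (∀ b ∈ l, PatTy b.1.2.1 b.1.1 b.2.1) →
      (∀ b ∈ l, ctxDom b.1.2.1 = Pat.mv b.1.1) →
      (∀ b ∈ l, TySD (ctxExt Γ b.1.2.1) b.1.2.2 b.2.2) →
      TySD Γ (.abs (l.map Prod.fst))
        (.arrow (bigUnion (l.map (fun b => b.2.1))) (bigUnion (l.map (fun b => b.2.2))))
  | app {Γ : TyCtx} {r u : Tm} {A C : MuTy} (ABs : List (MuTy × MuTy)) :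
      ABs ≠ [] →
      TySD Γ r A →
      EqMu A (bigUnion (ABs.map (fun q => .arrow q.1 q.2))) →
      (∀ q ∈ ABs, ¬ (q.1).IsUnion) →
      TySD Γ u C →
      (∀ q ∈ ABs, Sub C q.1) →
      TySD Γ (.app r u) (bigUnion (ABs.map Prod.snd))

lemma pathKey_nonneg_and_lt_two : ∀ ρ : List Bool, 0 ≤ pathKey ρ ∧ pathKey ρ < 2
  | [] => by norm_num [pathKey]
  | b :: ρ => by
      obtain ⟨h0, h2⟩ := pathKey_nonneg_and_lt_two ρ
      cases b <;> simp only [pathKey] <;> constructor <;> norm_num <;> linarith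

lemma prefix_or_prefix_of_pathKey_eq :
    ∀ {ρ ρ' : List Bool}, pathKey ρ = pathKey ρ' → ρ <+: ρ' ∨ ρ' <+: ρ
  | [], _, _ => Or.inl List.nil_prefix
  | _, [], _ => Or.inr List.nil_prefix
  | b :: ρ, b' :: ρ', h => by
      have hρ := pathKey_nonneg_and_lt_two ρ
      have hρ' := pathKey_nonneg_and_lt_two ρ'
      -- the first bit decides between `[0, 1)` and `[1, 2)`
      obtain rfl : b = b' := by
        cases b <;> cases b' <;> simp only [pathKey] at h <;> first | rfl | (norm_num at h; linarith)
      have htail : pathKey ρ = pathKey ρ' := by cases b <;> simp only [pathKey] at h <;> linarith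
      simpa only [List.cons_prefix_cons, true_and] using prefix_or_prefix_of_pathKey_eq htail

lemma injOn_pathKey_compPaths (t : PTree) : Set.InjOn pathKey (compPaths t) := by
  intro ρ hρ ρ' hρ' hkey
  by_contra hne
  rcases prefix_or_prefix_of_pathKey_eq hkey with hp | hp
  · exact hρ.2.2 (hρ'.1 ρ hp hne)
  · exact hρ'.2.2 (hρ.1 ρ' hp (Ne.symm hne))

section Rank

variable {α β : Type*} [LinearOrder β] {S : Set α} {f : α → β}

noncomputable def rankBy (S : Set α) (f : α → β) (x : α) : ℕ := {z | z ∈ S ∧ f z < f x}.ncard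

lemma rankBy_lt_rankBy (hS : S.Finite) {x y : α} (hx : x ∈ S) (hxy : f x < f y) :
    rankBy S f x < rankBy S f y :=
  Set.ncard_lt_ncard ⟨fun _ hz => ⟨hz.1, hz.2.trans hxy⟩, fun h => (h ⟨hx, hxy⟩).2.false⟩
    (hS.subset fun _ hz => hz.1)

lemma rankBy_lt_ncard (hS : S.Finite) {x : α} (hx : x ∈ S) : rankBy S f x < S.ncard :=
  Set.ncard_lt_ncard ⟨fun _ hz => hz.1, fun h => (h hx).2.false⟩ hS

lemma injOn_rankBy (hS : S.Finite) (hf : Set.InjOn f S) : Set.InjOn (rankBy S f) S := by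
  intro x hx y hy h
  rcases lt_trichotomy (f x) (f y) with hlt | heq | hgt
  · exact absurd h (rankBy_lt_rankBy hS hx hlt).ne
  · exact hf hx hy heq
  · exact absurd h (rankBy_lt_rankBy hS hy hgt).ne'

lemma image_rankBy (hS : S.Finite) (hf : Set.InjOn f S) :
    rankBy S f '' S = Set.Iio S.ncard :=
  Set.eq_of_subset_of_ncard_le (Set.image_subset_iff.2 fun _ hx => rankBy_lt_ncard hS hx)
    (by rw [Set.ncard_Iio_nat, (injOn_rankBy hS hf).ncard_image]) (Set.finite_Iio _)

end Rank

def GoodT (t : PTree) : Prop :=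
  ∀ π : List Bool, ¬ ∃ g : ℕ → Bool, ∀ n, t (π ++ (List.range n).map g) = some TSym.union

lemma GoodT.subtree {t : PTree} (h : GoodT t) (ρ : List Bool) : GoodT (subtreeAt t ρ) :=
  fun π ⟨g, hg⟩ => h (ρ ++ π) ⟨g, fun n => by simpa [subtreeAt, List.append_assoc] using hg n⟩

lemma GoodT.child {t : PTree} (h : GoodT t) (b : Bool) : GoodT (childT t b) :=
  h.subtree [b]

lemma goodT_of_ITree (A : ITree) : GoodT A.label :=
  fun π ⟨g, hg⟩ => A.noUnionBranch ⟨π, g, hg⟩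

def UnionChild (s t : PTree) : Prop := t [] = some .union ∧ ∃ b, s = childT t b

lemma acc_unionChild {t : PTree} (ht : GoodT t) : Acc UnionChild t := by
  by_contra hacc
  obtain ⟨F, rfl, hF⟩ := not_acc_iff_exists_descending_chain.1 hacc
  choose hunion g hg using hF
  have hF : ∀ n, F n = subtreeAt (F 0) ((List.range n).map g) := by
    intro n
    induction n with
    | zero => rfl
    | succ n ih =>
      rw [hg, ih]
      funext π
      simp [childT, subtreeAt, List.range_succ, List.append_assoc]
  exact ht [] ⟨g, fun n => by simpa [hF n, subtreeAt] using hunion n⟩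

lemma isCompPath_nil {t : PTree} : IsCompPath t [] ↔ (t []).isSome ∧ t [] ≠ some .union := by
  simp [IsCompPath, List.prefix_nil]

lemma isCompPath_cons {t : PTree} {b : Bool} {ρ : List Bool} :
    IsCompPath t (b :: ρ) ↔ t [] = some .union ∧ IsCompPath (childT t b) ρ := by
  simp only [IsCompPath, List.prefix_cons_iff, childT]
  constructor
  · rintro ⟨hpre, hsome, hne⟩
    refine ⟨hpre [] (Or.inl rfl) (List.cons_ne_nil _ _).symm,
      fun ρ' hρ' hne' => hpre _ (Or.inr ⟨ρ', rfl, hρ'⟩) (by simpa using hne'), hsome, hne⟩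
  · rintro ⟨hroot, hpre, hsome, hne⟩
    refine ⟨?_, hsome, hne⟩
    rintro ρ' (rfl | ⟨ρ'', rfl, hρ''⟩) hne'
    · exact hroot
    · exact hpre ρ'' hρ'' (by simpa using hne')

lemma compPaths_subset (t : PTree) :
    compPaths t ⊆ {[]} ∪ ⋃ b, (List.cons b) '' compPaths (childT t b) := by
  rintro (_ | ⟨b, ρ⟩) hρ
  · exact Or.inl rfl
  · exact Or.inr (Set.mem_iUnion.2 ⟨b, ρ, (isCompPath_cons.1 hρ).2, rfl⟩)

lemma compPaths_finite {t : PTree} (ht : GoodT t) : (compPaths t).Finite := by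
  induction acc_unionChild ht with
  | intro t _ ih =>
    by_cases hroot : t [] = some .union
    · refine ((Set.finite_singleton _).union (Set.finite_iUnion fun b => ?_)).subset
        (compPaths_subset t)
      exact (ih _ ⟨hroot, b, rfl⟩ (ht.child b)).image _
    · refine (Set.finite_singleton []).subset ?_
      rintro (_ | ⟨b, ρ⟩) hρ
      · rfl
      · exact absurd (isCompPath_cons.1 hρ).1 hroot

lemma isNthComp_unique {t : PTree} (ht : GoodT t) {j : ℕ} {ρ ρ' : List Bool}
    (h : IsNthComp t j ρ) (h' : IsNthComp t j ρ') : ρ = ρ' :=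
  injOn_rankBy (compPaths_finite ht) (injOn_pathKey_compPaths t) h.1 h'.1 (h.2.trans h'.2.symm)

lemma exists_isNthComp {t : PTree} (ht : GoodT t) {j : ℕ} (hj : j < (compPaths t).ncard) :
    ∃ ρ, IsNthComp t j ρ := by
  rw [← Set.mem_Iio, ← image_rankBy (compPaths_finite ht) (injOn_pathKey_compPaths t)] at hj
  obtain ⟨ρ, hρ, rfl⟩ := hj
  exact ⟨ρ, hρ, rfl⟩

lemma transN_nil_eq_leaf_iff {t : PTree} {a : Leaf} :
    transN t [] = some (.leaf a) ↔ t [] = some (.leaf a) := by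
  rcases ht : t [] with _ | (_ | _ | _ | _) <;> simp [transN, transLabel, ht]

lemma transN_nil_eq_app_iff {t : PTree} : transN t [] = some .app ↔ t [] = some .app := by
  rcases ht : t [] with _ | (_ | _ | _ | _) <;> simp [transN, transLabel, ht]

lemma transN_nil_eq_arrow_iff {t : PTree} : transN t [] = some .arrow ↔ t [] = some .arrow := by
  rcases ht : t [] with _ | (_ | _ | _ | _) <;> simp [transN, transLabel, ht]

lemma transN_nil_eq_union_iff {t : PTree} {n : ℕ} :
    transN t [] = some (.union n) ↔ t [] = some .union ∧ (compPaths t).ncard = n := by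
  rcases ht : t [] with _ | (_ | _ | _ | _) <;> simp [transN, transLabel, ht]

lemma isUnionRootN_transN_iff {t : PTree} : IsUnionRootN (transN t) ↔ t [] = some .union := by
  simp [IsUnionRootN, transN_nil_eq_union_iff]

lemma childN_transN_zero {t : PTree} (h : t [] = some .app ∨ t [] = some .arrow) :
    childN (transN t) 0 = transN (childT t false) := by
  funext π
  rcases h with h | h <;> simp [childN, transN, transLabel, h]

lemma childN_transN_one {t : PTree} (h : t [] = some .app ∨ t [] = some .arrow) :
    childN (transN t) 1 = transN (childT t true) := by
  funext π
  rcases h with h | h <;> simp [childN, transN, transLabel, h]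

lemma childN_transN_of_isNthComp {t : PTree} (ht : GoodT t) (h : t [] = some .union)
    {j : ℕ} {ρ : List Bool} (hρ : IsNthComp t j ρ) :
    childN (transN t) j = transN (subtreeAt t ρ) := by
  funext π
  have hex : ∃ ρ, IsNthComp t j ρ := ⟨ρ, hρ⟩
  simp only [childN, transN, transLabel, h, dif_pos hex, isNthComp_unique ht hex.choose_spec hρ]

lemma exists_childN_transN_of_lt {t : PTree} (ht : GoodT t) (h : t [] = some .union)
    {j : ℕ} (hj : j < (compPaths t).ncard) :
    ∃ ρ ∈ compPaths t, childN (transN t) j = transN (subtreeAt t ρ) := by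
  obtain ⟨ρ, hρ⟩ := exists_isNthComp ht hj
  exact ⟨ρ, hρ.1, childN_transN_of_isNthComp ht h hρ⟩

lemma exists_childN_transN_of_mem {t : PTree} (ht : GoodT t) (h : t [] = some .union)
    {ρ : List Bool} (hρ : ρ ∈ compPaths t) :
    ∃ j < (compPaths t).ncard, childN (transN t) j = transN (subtreeAt t ρ) :=
  ⟨_, rankBy_lt_ncard (compPaths_finite ht) hρ, childN_transN_of_isNthComp ht h ⟨hρ, rfl⟩⟩

lemma not_isUnionRootN_childN_transN {t : PTree} (ht : GoodT t) (h : t [] = some .union)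
    {j : ℕ} (hj : j < (compPaths t).ncard) : ¬ IsUnionRootN (childN (transN t) j) := by
  obtain ⟨ρ, hρ, heq⟩ := exists_childN_transN_of_lt ht h hj
  rw [heq, isUnionRootN_transN_iff]
  simpa [subtreeAt] using hρ.2.2

def transImage (R : PTree → PTree → Prop) (X Y : PTreeN) : Prop :=
  ∃ t u, GoodT t ∧ GoodT u ∧ R t u ∧ transN t = X ∧ transN u = Y

lemma transImage_transN {R : PTree → PTree → Prop} {t u : PTree} (ht : GoodT t) (hu : GoodT u)
    (h : R t u) : transImage R (transN t) (transN u) :=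
  ⟨t, u, ht, hu, h, rfl, rfl⟩

lemma nSubStep_transN_of_subTStep {R : PTree → PTree → Prop} {t u : PTree}
    (ht : GoodT t) (hu : GoodT u) (h : SubTStep R t u) :
    NSubStep (fun _ _ => False) (transImage R) (transN t) (transN u) := by
  simp only [NSubStep, or_false]
  rcases h with ⟨a, hta, hua⟩ | ⟨htapp, huapp, h0, h1⟩ | ⟨htarr, huarr, h0, h1⟩ |
    ⟨htU, huU, hall⟩ | ⟨htU, huU, ρ', hρ', hR⟩ | ⟨htU, huU, hall⟩
  · exact Or.inl ⟨a, transN_nil_eq_leaf_iff.2 hta, transN_nil_eq_leaf_iff.2 hua⟩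
  · refine Or.inr (Or.inl ⟨transN_nil_eq_app_iff.2 htapp, transN_nil_eq_app_iff.2 huapp, ?_, ?_⟩)
    · rw [childN_transN_zero (.inl htapp), childN_transN_zero (.inl huapp)]
      exact transImage_transN (ht.child _) (hu.child _) h0
    · rw [childN_transN_one (.inl htapp), childN_transN_one (.inl huapp)]
      exact transImage_transN (ht.child _) (hu.child _) h1
  · refine Or.inr (Or.inr (Or.inl
      ⟨transN_nil_eq_arrow_iff.2 htarr, transN_nil_eq_arrow_iff.2 huarr, ?_, ?_⟩))
    · rw [childN_transN_zero (.inr htarr), childN_transN_zero (.inr huarr)]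
      exact transImage_transN (hu.child _) (ht.child _) h0
    · rw [childN_transN_one (.inr htarr), childN_transN_one (.inr huarr)]
      exact transImage_transN (ht.child _) (hu.child _) h1
  · refine Or.inr (Or.inr (Or.inr (Or.inr (Or.inl ⟨_, transN_nil_eq_union_iff.2 ⟨htU, rfl⟩,
      mt isUnionRootN_transN_iff.1 huU, fun i hi => not_isUnionRootN_childN_transN ht htU hi,
      fun i hi => ?_⟩))))
    obtain ⟨ρ, hρ, heq⟩ := exists_childN_transN_of_lt ht htU hi
    exact heq ▸ transImage_transN (ht.subtree ρ) hu (hall ρ hρ)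
  · obtain ⟨k, hk, heq⟩ := exists_childN_transN_of_mem hu huU hρ'
    exact Or.inr (Or.inr (Or.inr (Or.inr (Or.inr ⟨_, transN_nil_eq_union_iff.2 ⟨huU, rfl⟩,
      mt isUnionRootN_transN_iff.1 htU, fun j hj => not_isUnionRootN_childN_transN hu huU hj,
      k, hk, heq ▸ transImage_transN ht (hu.subtree ρ') hR⟩))))
  · have hmatch : ∀ i < (compPaths t).ncard, ∃ j < (compPaths u).ncard,
        transImage R (childN (transN t) i) (childN (transN u) j) := by
      intro i hi
      obtain ⟨ρ, hρ, heq⟩ := exists_childN_transN_of_lt ht htU hi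
      obtain ⟨ρ', hρ', hR⟩ := hall ρ hρ
      obtain ⟨j, hj, heq'⟩ := exists_childN_transN_of_mem hu huU hρ'
      exact ⟨j, hj, heq ▸ heq' ▸ transImage_transN (ht.subtree ρ) (hu.subtree ρ') hR⟩
    choose! f hf using hmatch
    exact Or.inr (Or.inr (Or.inr (Or.inl ⟨_, _, transN_nil_eq_union_iff.2 ⟨htU, rfl⟩,
      transN_nil_eq_union_iff.2 ⟨huU, rfl⟩, fun i hi => not_isUnionRootN_childN_transN ht htU hi,
      fun j hj => not_isUnionRootN_childN_transN hu huU hj, f, hf⟩)))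

def transPreimage (S : PTreeN → PTreeN → Prop) (t u : PTree) : Prop :=
  GoodT t ∧ GoodT u ∧ S (transN t) (transN u)

lemma subTStep_of_nSubStep_transN {S : PTreeN → PTreeN → Prop} {t u : PTree}
    (ht : GoodT t) (hu : GoodT u) (h : NSubStep (fun _ _ => False) S (transN t) (transN u)) :
    SubTStep (transPreimage S) t u := by
  simp only [NSubStep, or_false] at h
  rcases h with ⟨a, hta, hua⟩ | ⟨htapp, huapp, h0, h1⟩ | ⟨htarr, huarr, h0, h1⟩ |
    ⟨n, m, htN, huN, -, -, f, hf⟩ | ⟨n, htN, huU, -, hall⟩ | ⟨m, huN, htU, -, k, hk, hS⟩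
  · exact Or.inl ⟨a, transN_nil_eq_leaf_iff.1 hta, transN_nil_eq_leaf_iff.1 hua⟩
  · rw [transN_nil_eq_app_iff] at htapp huapp
    rw [childN_transN_zero (.inl htapp), childN_transN_zero (.inl huapp)] at h0
    rw [childN_transN_one (.inl htapp), childN_transN_one (.inl huapp)] at h1
    exact Or.inr (Or.inl ⟨htapp, huapp, ⟨ht.child _, hu.child _, h0⟩, ⟨ht.child _, hu.child _, h1⟩⟩)
  · rw [transN_nil_eq_arrow_iff] at htarr huarr
    rw [childN_transN_zero (.inr htarr), childN_transN_zero (.inr huarr)] at h0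
    rw [childN_transN_one (.inr htarr), childN_transN_one (.inr huarr)] at h1
    exact Or.inr (Or.inr (Or.inl
      ⟨htarr, huarr, ⟨hu.child _, ht.child _, h0⟩, ⟨ht.child _, hu.child _, h1⟩⟩))
  · obtain ⟨htU, rfl⟩ := transN_nil_eq_union_iff.1 htN
    obtain ⟨huU, rfl⟩ := transN_nil_eq_union_iff.1 huN
    refine Or.inr (Or.inr (Or.inr (Or.inr (Or.inr ⟨htU, huU, fun ρ hρ => ?_⟩))))
    obtain ⟨i, hi, heq⟩ := exists_childN_transN_of_mem ht htU hρ
    obtain ⟨ρ', hρ', heq'⟩ := exists_childN_transN_of_lt hu huU (hf i hi).1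
    exact ⟨ρ', hρ', ht.subtree ρ, hu.subtree ρ', heq ▸ heq' ▸ (hf i hi).2⟩
  · obtain ⟨htU, rfl⟩ := transN_nil_eq_union_iff.1 htN
    refine Or.inr (Or.inr (Or.inr (Or.inl
      ⟨htU, mt isUnionRootN_transN_iff.2 huU, fun ρ hρ => ?_⟩)))
    obtain ⟨i, hi, heq⟩ := exists_childN_transN_of_mem ht htU hρ
    exact ⟨ht.subtree ρ, hu, heq ▸ hall i hi⟩
  · obtain ⟨huU, rfl⟩ := transN_nil_eq_union_iff.1 huN
    obtain ⟨ρ', hρ', heq⟩ := exists_childN_transN_of_lt hu huU hk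
    exact Or.inr (Or.inr (Or.inr (Or.inr (Or.inl
      ⟨mt isUnionRootN_transN_iff.2 htU, huU, ρ', hρ', ht, hu.subtree ρ', heq ▸ hS⟩))))

theorem subT_iff_subN (A B : ITree) :
    SubT A.label B.label ↔
      SubN (fun _ _ => False) (transN A.label) (transN B.label) := by
  constructor
  · rintro ⟨R, hR, hAB⟩
    refine ⟨transImage R, ?_, transImage_transN (goodT_of_ITree A) (goodT_of_ITree B) hAB⟩
    rintro _ _ ⟨t, u, ht, hu, htu, rfl, rfl⟩
    exact nSubStep_transN_of_subTStep ht hu (hR t u htu)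
  · rintro ⟨S, hS, hAB⟩
    refine ⟨transPreimage S, ?_, goodT_of_ITree A, goodT_of_ITree B, hAB⟩
    rintro t u ⟨ht, hu, htu⟩
    exact subTStep_of_nSubStep_transN ht hu (hS _ _ htu)

end CAPPaper
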